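/- arXiv:2411.14195 — 6 statements merged into one kernel-verified Lean document; each statement's English description precedes it below -/
import Mathlib

section
/- For every integer n ≥ 2 and every symmetric convex body K ⊂ ℝⁿ there exists a rotation U ∈ SO(n) such that the inclusion Q_{k-1}(U K) ⊆ 3 · Q_k(U K) holds for every k ∈ {2, …, n}. -/
/-!
Choose an orthonormal frame greedily: `v₀` points towards a point of `K` of maximal norm, and
`v₁, v₂, …` are chosen in the same way for the projection of `K` onto `v₀ᗮ`. In these coordinates
each `|x j|` attains its maximum over `K` at a point `z` of `K` whose coordinates after `j`
vanish. Given `x ∈ Q_{k-1}(K)` and a `k`-set `S` with least element `j`, pick `w ∈ K` agreeing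
with `x` on `S \ {j}`; then `(w + t • z) / 3` with `|t| ≤ 2` lies in `K` and agrees with `x / 3`
on `S`. Flipping the sign of a frame vector preserves all of this and fixes the orientation.
-/

open Set Pointwise

/-- The orthogonal projection of `ℝⁿ` onto the coordinate subspace `span {e_j : j ∈ S}`. -/
noncomputable def coordProj {n : ℕ} (S : Finset (Fin n)) (x : EuclideanSpace ℝ (Fin n)) :
    EuclideanSpace ℝ (Fin n) :=
  WithLp.toLp 2 (fun j => if j ∈ S then x j else 0)

/-- The `k`-convex hull of a set `K ⊆ ℝⁿ`. -/
noncomputable def kConvexHull (n k : ℕ) (K : Set (EuclideanSpace ℝ (Fin n))) :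
    Set (EuclideanSpace ℝ (Fin n)) :=
  ⋂ S ∈ {S : Finset (Fin n) | S.card = k}, coordProj S ⁻¹' (coordProj S '' K)

open RealInnerProductSpace

section Frame

variable {E F : Type*} [NormedAddCommGroup E] [InnerProductSpace ℝ E]
  [NormedAddCommGroup F] [InnerProductSpace ℝ F]

theorem Orthonormal.fin_cons {m : ℕ} {v : Fin m → E} (hv : Orthonormal ℝ v) {u : E}
    (hu : ‖u‖ = 1) (huv : ∀ i, ⟪u, v i⟫ = 0) :
    Orthonormal ℝ (Fin.cons u v : Fin (m + 1) → E) := by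
  rw [orthonormal_iff_ite] at hv ⊢
  intro i j
  cases i using Fin.cases <;> cases j using Fin.cases <;>
    simp [hv, huv, real_inner_comm u, hu, Fin.succ_ne_zero, (Fin.succ_ne_zero _).symm]

theorem exists_norm_eq_one_smul_eq [Nontrivial E] (z : E) : ∃ u : E, ‖u‖ = 1 ∧ z = ‖z‖ • u := by
  rcases eq_or_ne z 0 with rfl | hz
  · obtain ⟨u, hu⟩ := exists_norm_eq E zero_le_one
    exact ⟨u, hu, by simp⟩
  · exact ⟨‖z‖⁻¹ • z, norm_smul_inv_norm hz, by simp [smul_smul, hz]⟩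

def IsTriangularFrame {ι : Type*} [LT ι] (K : Set E) (v : ι → E) : Prop :=
  ∀ j, ∃ z ∈ K, (∀ i, j < i → ⟪z, v i⟫ = 0) ∧ ∀ x ∈ K, |⟪x, v j⟫| ≤ |⟪z, v j⟫|

namespace IsTriangularFrame

theorem image_linearIsometryEquiv {ι : Type*} [LT ι] {K : Set E} {v : ι → E}
    (h : IsTriangularFrame K v) (L : E ≃ₗᵢ[ℝ] F) : IsTriangularFrame (L '' K) (L ∘ v) := by
  intro j
  obtain ⟨z, hzK, hz0, hzmax⟩ := h j
  refine ⟨L z, mem_image_of_mem L hzK, by simpa using hz0, ?_⟩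
  rintro _ ⟨x, hx, rfl⟩
  simpa using hzmax x hx

theorem of_eq_or_eq_neg {ι : Type*} [LT ι] {K : Set E} {v w : ι → E}
    (h : IsTriangularFrame K v) (hw : ∀ i, w i = v i ∨ w i = -v i) : IsTriangularFrame K w := by
  intro j
  obtain ⟨z, hzK, hz0, hzmax⟩ := h j
  refine ⟨z, hzK, fun i hi => ?_, fun x hx => ?_⟩
  · rcases hw i with h | h <;> simp [h, hz0 i hi]
  · rcases hw j with h | h <;> simpa [h] using hzmax x hx

theorem fin_cons {K : Set E} {z₀ u : E} (hz₀K : z₀ ∈ K) (hz₀max : ∀ x ∈ K, ‖x‖ ≤ ‖z₀‖)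
    (hu : ‖u‖ = 1) (hz₀u : z₀ = ‖z₀‖ • u) {m : ℕ} {v : Fin m → (ℝ ∙ u)ᗮ}
    (hv : IsTriangularFrame ((ℝ ∙ u)ᗮ.orthogonalProjectionOnto '' K) v) :
    IsTriangularFrame K (Fin.cons u (Subtype.val ∘ v) : Fin (m + 1) → E) := by
  intro j
  cases j using Fin.cases with
  | zero =>
    have hz₀v (i : Fin m) : ⟪z₀, (v i : E)⟫ = 0 :=
      Submodule.inner_right_of_mem_orthogonal
        (hz₀u ▸ Submodule.smul_mem _ _ (Submodule.mem_span_singleton_self u)) (v i).2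
    refine ⟨z₀, hz₀K, fun i hi => ?_, fun x hx => ?_⟩
    · cases i using Fin.cases with
      | zero => exact absurd hi (lt_irrefl 0)
      | succ i => simpa using hz₀v i
    · calc |⟪x, u⟫| ≤ ‖x‖ * ‖u‖ := abs_real_inner_le_norm x u
        _ ≤ ‖z₀‖ := by rw [hu, mul_one]; exact hz₀max x hx
        _ = |⟪z₀, u⟫| := by
          conv_rhs => rw [hz₀u]
          simp [real_inner_smul_left, hu]
  | succ j =>
    obtain ⟨_, ⟨z, hzK, rfl⟩, hz0, hzmax⟩ := hv j
    refine ⟨z, hzK, fun i hi => ?_, fun x hx => ?_⟩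
    · cases i using Fin.cases with
      | zero => exact absurd hi (Fin.not_lt_zero _)
      | succ i => simpa using hz0 i (Fin.succ_lt_succ_iff.mp hi)
    · simpa using hzmax _ ⟨x, hx, rfl⟩

end IsTriangularFrame

theorem exists_orthonormal_isTriangularFrame [FiniteDimensional ℝ E] {K : Set E}
    (hK : IsCompact K) (hne : K.Nonempty) {m : ℕ} (hm : Module.finrank ℝ E = m) :
    ∃ v : Fin m → E, Orthonormal ℝ v ∧ IsTriangularFrame K v := by
  induction m generalizing E with
  | zero => exact ⟨Fin.elim0, ⟨fun i => i.elim0, fun i => i.elim0⟩, fun j => j.elim0⟩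
  | succ m ih =>
    have : Fact (Module.finrank ℝ E = m + 1) := ⟨hm⟩
    have : Nontrivial E := Module.nontrivial_of_finrank_eq_succ hm
    obtain ⟨z₀, hz₀K, hz₀max⟩ := hK.exists_isMaxOn hne continuous_norm.continuousOn
    obtain ⟨u, hu, hz₀u⟩ := exists_norm_eq_one_smul_eq z₀
    set W := (ℝ ∙ u)ᗮ
    obtain ⟨v, hv, hvK⟩ := ih (hK.image W.orthogonalProjectionOnto.continuous) (hne.image _)
      (Submodule.finrank_orthogonal_span_singleton (norm_ne_zero_iff.mp (hu.trans_ne one_ne_zero)))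
    refine ⟨_, (hv.comp_linearIsometry W.subtypeₗᵢ).fin_cons hu fun i => ?_,
      hvK.fin_cons hz₀K hz₀max hu hz₀u⟩
    exact Submodule.inner_right_of_mem_orthogonal (Submodule.mem_span_singleton_self u) (v i).2

theorem exists_orthonormalBasis_isTriangularFrame [FiniteDimensional ℝ E] {K : Set E}
    (hK : IsCompact K) (hne : K.Nonempty) {m : ℕ} (hm : Module.finrank ℝ E = m) :
    ∃ b : OrthonormalBasis (Fin m) ℝ E, IsTriangularFrame K b := by
  obtain ⟨v, hv, hvK⟩ := exists_orthonormal_isTriangularFrame hK hne hm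
  refine ⟨.mk hv (hv.linearIndependent.span_eq_top_of_card_eq_finrank' ?_).ge, ?_⟩
  · simp [hm]
  · rwa [OrthonormalBasis.coe_mk]

end Frame

theorem OrthonormalBasis.det_repr_eq_one {ι : Type*} [Fintype ι] [DecidableEq ι]
    (b : OrthonormalBasis ι ℝ (EuclideanSpace ℝ ι))
    (hb : b.toBasis.orientation = (EuclideanSpace.basisFun ι ℝ).toBasis.orientation) :
    LinearMap.det (b.repr.toLinearEquiv : EuclideanSpace ℝ ι →ₗ[ℝ] EuclideanSpace ℝ ι) = 1 := by
  set e := EuclideanSpace.basisFun ι ℝ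
  have hcomp := e.toBasis.det_comp b.repr.toLinearEquiv.toLinearMap b
  have hrepr : b.repr.toLinearEquiv.toLinearMap ∘ b = e.toBasis := by
    ext i : 1
    simp [e, b.repr_self, EuclideanSpace.basisFun_apply]
  have hdet : e.toBasis.det b = 1 := by
    simpa using e.det_to_matrix_orthonormalBasis_of_same_orientation b hb.symm
  rwa [hrepr, Module.Basis.det_self, hdet, mul_one, eq_comm] at hcomp

theorem exists_abs_le_mul_eq {a b c : ℝ} (hc : 0 ≤ c) (h : |a| ≤ c * |b|) :
    ∃ t : ℝ, |t| ≤ c ∧ t * b = a := by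
  rcases eq_or_ne b 0 with rfl | hb
  · exact ⟨0, by simpa using hc, by simpa using (abs_nonpos_iff.mp (by simpa using h)).symm⟩
  · refine ⟨a / b, ?_, div_mul_cancel₀ a hb⟩
    rwa [abs_div, div_le_iff₀ (abs_pos.mpr hb)]

theorem Balanced.inv_three_smul_add_smul_mem {E : Type*} [AddCommGroup E] [Module ℝ E]
    {C : Set E} (hconv : Convex ℝ C) (hbal : Balanced ℝ C) {w z : E} (hw : w ∈ C) (hz : z ∈ C)
    {t : ℝ} (ht : |t| ≤ 2) : (3 : ℝ)⁻¹ • (w + t • z) ∈ C := by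
  have htz : (t / 2) • z ∈ C :=
    hbal.smul_mem (by rw [Real.norm_eq_abs, abs_div]; norm_num; linarith) hz
  convert hconv hw htz (by norm_num : (0 : ℝ) ≤ 1 / 3) (by norm_num : (0 : ℝ) ≤ 2 / 3)
    (by norm_num) using 1
  module

section KConvexHull

variable {n k : ℕ} {C : Set (EuclideanSpace ℝ (Fin n))} {x : EuclideanSpace ℝ (Fin n)}

theorem mem_kConvexHull :
    x ∈ kConvexHull n k C ↔ ∀ S : Finset (Fin n), S.card = k → ∃ y ∈ C, ∀ i ∈ S, y i = x i := by
  simp only [kConvexHull, mem_iInter, mem_preimage, mem_image]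
  refine forall₂_congr fun S _ => exists_congr fun y => and_congr_right fun _ => ?_
  simp only [coordProj, WithLp.toLp.injEq, funext_iff]
  exact forall_congr' fun i => by by_cases hi : i ∈ S <;> simp [hi]

theorem exists_mem_apply_eq_of_mem_kConvexHull (hx : x ∈ kConvexHull n k C) (hk : 1 ≤ k)
    (hkn : k ≤ n) (j : Fin n) : ∃ y ∈ C, y j = x j := by
  obtain ⟨T, hjT, -, hT⟩ := Finset.exists_subsuperset_card_eq (Finset.subset_univ {j})
    (by simpa using hk) (by simpa using hkn)
  obtain ⟨y, hyC, hy⟩ := mem_kConvexHull.mp hx T hT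
  exact ⟨y, hyC, hy j (hjT (Finset.mem_singleton_self j))⟩

theorem kConvexHull_sub_one_subset_three_smul (hconv : Convex ℝ C) (hsymm : ∀ x ∈ C, -x ∈ C)
    (hC : IsTriangularFrame C (EuclideanSpace.basisFun (Fin n) ℝ)) (hk : 2 ≤ k) :
    kConvexHull n (k - 1) C ⊆ (3 : ℝ) • kConvexHull n k C := by
  intro x hx
  rw [mem_smul_set_iff_inv_smul_mem₀ three_ne_zero, mem_kConvexHull]
  intro S hS
  have hkn : k ≤ n := by simpa [← hS] using S.card_le_univ
  set j := S.min' (Finset.card_pos.mp (by omega))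
  obtain ⟨z, hzC, hz0, hzmax⟩ := hC j
  simp only [EuclideanSpace.inner_basisFun_real] at hz0 hzmax
  obtain ⟨y, hyC, hyx⟩ := exists_mem_apply_eq_of_mem_kConvexHull hx (by omega) (by omega) j
  obtain ⟨w, hwC, hwx⟩ := mem_kConvexHull.mp hx (S.erase j)
    (by rw [Finset.card_erase_of_mem (S.min'_mem _), hS])
  obtain ⟨t, ht, htz⟩ : ∃ t : ℝ, |t| ≤ 2 ∧ t * z j = x j - w j := by
    refine exists_abs_le_mul_eq zero_le_two ?_
    linarith [abs_sub (x j) (w j), hyx ▸ hzmax y hyC, hzmax w hwC]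
  have hbal : Balanced ℝ C := (balanced_iff_neg_mem hconv).mpr hsymm
  refine ⟨_, hbal.inv_three_smul_add_smul_mem hconv hwC hzC ht, fun i hi => ?_⟩
  simp only [PiLp.smul_apply, PiLp.add_apply, smul_eq_mul]
  rcases eq_or_ne i j with rfl | hij
  · rw [htz]
    ring
  · rw [hwx i (Finset.mem_erase.mpr ⟨hij, hi⟩),
      hz0 i (lt_of_le_of_ne (S.min'_le i hi) (Ne.symm hij))]
    ring

end KConvexHull

/-- For every `n ≥ 2` and every symmetric convex body `K ⊆ ℝⁿ` there is `U ∈ SO(n)` such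
that `Q_{k-1}(UK) ⊆ 3 • Q_k(UK)` for every `k ∈ {2, …, n}`. -/
theorem stmt_0 (n : ℕ) (hn : 2 ≤ n) (K : Set (EuclideanSpace ℝ (Fin n)))
    (hKcomp : IsCompact K) (hKconv : Convex ℝ K) (hKint : (interior K).Nonempty)
    (hKsym : K = -K) :
    ∃ U : EuclideanSpace ℝ (Fin n) ≃ₗᵢ[ℝ] EuclideanSpace ℝ (Fin n),
      LinearMap.det (U.toLinearEquiv : EuclideanSpace ℝ (Fin n) →ₗ[ℝ]
        EuclideanSpace ℝ (Fin n)) = 1 ∧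
      ∀ k : ℕ, 2 ≤ k → k ≤ n →
        kConvexHull n (k - 1) (⇑U '' K) ⊆ (3 : ℝ) • kConvexHull n k (⇑U '' K) := by
  have : Nonempty (Fin n) := ⟨⟨0, by omega⟩⟩
  set e := EuclideanSpace.basisFun (Fin n) ℝ
  obtain ⟨b, hb⟩ := exists_orthonormalBasis_isTriangularFrame hKcomp
    (hKint.mono interior_subset) finrank_euclideanSpace_fin
  set b' := b.adjustToOrientation e.toBasis.orientation
  have hb' : IsTriangularFrame (b'.repr '' K) e := by
    have hrepr : ⇑b'.repr ∘ ⇑b' = e := by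
      ext i : 1
      simp [e, b'.repr_self, EuclideanSpace.basisFun_apply]
    rw [← hrepr]
    exact (hb.of_eq_or_eq_neg
      (b.adjustToOrientation_apply_eq_or_eq_neg e.toBasis.orientation)).image_linearIsometryEquiv b'.repr
  refine ⟨b'.repr, b'.det_repr_eq_one (b.orientation_adjustToOrientation _), fun k hk _ => ?_⟩
  refine kConvexHull_sub_one_subset_three_smul (hKconv.linear_image _) ?_ hb' hk
  rintro _ ⟨x, hx, rfl⟩
  refine ⟨-x, ?_, map_neg _ _⟩
  rw [hKsym]
  exact neg_mem_neg.mpr hx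
end

section
/- Let C be a closed, convex, bounded set with nonempty interior in a real Hilbert space H and let 𝐞 be a complete orthonormal system for H. Then for every positive integer k, the k-convex hull Q_k(𝐞, C) is closed in the norm topology of H. -/
open Set

/-- Orthogonal projection of a Hilbert space `H` onto the closed span of `T ⊆ H`,
viewed as a map `H → H`. -/
noncomputable def projCl {H : Type*} [NormedAddCommGroup H] [InnerProductSpace ℝ H]
    [CompleteSpace H] (T : Set H) : H →L[ℝ] H :=
  haveI : CompleteSpace ((Submodule.span ℝ T).topologicalClosure) :=
    (Submodule.isClosed_topologicalClosure _).completeSpace_coe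
  ((Submodule.span ℝ T).topologicalClosure).subtypeL.comp
    (Submodule.orthogonalProjectionOnto ((Submodule.span ℝ T).topologicalClosure))

/-- `E ⊆ H` is a complete orthonormal system: its elements are pairwise orthogonal unit
vectors and its span is dense in `H`. -/
def IsCompleteONS {H : Type*} [NormedAddCommGroup H] [InnerProductSpace ℝ H]
    (E : Set H) : Prop :=
  Orthonormal ℝ ((↑) : E → H) ∧ (Submodule.span ℝ E).topologicalClosure = ⊤

/-- The `k`-convex hull of `C ⊆ H` with respect to the orthonormal system `E`. -/
noncomputable def kConvexHullH {H : Type*} [NormedAddCommGroup H] [InnerProductSpace ℝ H]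
    [CompleteSpace H] (E : Set H) (k : ℕ) (C : Set H) : Set H :=
  ⋂ S ∈ {S : Set H | S ⊆ E ∧ S.Finite ∧ S.ncard = k}, projCl S ⁻¹' (projCl S '' C)

/-!
Each set in the intersection defining `Q_k(𝐞, C)` is the preimage under the continuous map
`P_S` of `P_S(C)`, so it suffices that a continuous linear image of a closed bounded convex
set `C` is closed. For `y` in the closure of `f(C)`, the sets `C ∩ f⁻¹(B̄(y, 1/(n+1)))` are
nested, nonempty, closed, bounded and convex; their minimal-norm points form a Cauchy
sequence, because for `n ≤ k` the variational inequality at the minimal-norm point `mₙ`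
gives `‖mₖ - mₙ‖² ≤ ‖mₖ‖² - ‖mₙ‖²` and `‖mₙ‖²` increases to a finite limit. The limit
lies in `C` and is mapped to `y`.
-/

open Filter

section MinimalNorm

variable {H : Type*} [NormedAddCommGroup H] [InnerProductSpace ℝ H]

lemma exists_forall_norm_sub_sq_le {K : Set H} (hne : K.Nonempty) (hcompl : IsComplete K)
    (hconv : Convex ℝ K) : ∃ v ∈ K, ∀ w ∈ K, ‖w - v‖ ^ 2 ≤ ‖w‖ ^ 2 - ‖v‖ ^ 2 := by
  obtain ⟨v, hv, hmin⟩ := exists_norm_eq_iInf_of_complete_convex hne hcompl hconv 0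
  have hvar := (norm_eq_iInf_iff_real_inner_le_zero hconv hv).1 hmin
  refine ⟨v, hv, fun w hw => ?_⟩
  have hinner : ‖v‖ ^ 2 ≤ inner ℝ w v := by
    have := hvar w hw
    rw [zero_sub, inner_neg_left, inner_sub_right, real_inner_self_eq_norm_sq,
      real_inner_comm] at this
    linarith
  rw [norm_sub_sq_real]
  linarith

variable [CompleteSpace H]

lemma Antitone.nonempty_iInter_of_isClosed_of_convex {C : ℕ → Set H} (hanti : Antitone C)
    (hne : ∀ n, (C n).Nonempty) (hcl : ∀ n, IsClosed (C n)) (hconv : ∀ n, Convex ℝ (C n))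
    (hbdd : Bornology.IsBounded (C 0)) : (⋂ n, C n).Nonempty := by
  choose m hm hmin using fun n => exists_forall_norm_sub_sq_le (hne n) (hcl n).isComplete
    (hconv n)
  have hmC : ∀ {n k}, n ≤ k → m k ∈ C n := fun hnk => hanti hnk (hm _)
  have hdist : ∀ {n k}, n ≤ k → dist (m k) (m n) ^ 2 ≤ ‖m k‖ ^ 2 - ‖m n‖ ^ 2 :=
    fun hnk => by rw [dist_eq_norm]; exact hmin _ _ (hmC hnk)
  have hsq_mono : Monotone fun n => ‖m n‖ ^ 2 := fun n k hnk => by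
    linarith [hdist hnk, sq_nonneg (dist (m k) (m n))]
  obtain ⟨R, hR⟩ := hbdd.exists_norm_le
  have hsq_bdd : BddAbove (range fun n => ‖m n‖ ^ 2) := ⟨R ^ 2, by
    rintro _ ⟨n, rfl⟩
    exact pow_le_pow_left₀ (norm_nonneg _) (hR _ (hmC n.zero_le)) 2⟩
  have hsq_cauchy : CauchySeq fun n => ‖m n‖ ^ 2 :=
    (tendsto_atTop_ciSup hsq_mono hsq_bdd).cauchySeq
  have hcauchy : CauchySeq m := by
    refine Metric.cauchySeq_iff'.2 fun ε hε => ?_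
    obtain ⟨N, hN⟩ := Metric.cauchySeq_iff'.1 hsq_cauchy (ε ^ 2) (by positivity)
    refine ⟨N, fun n hn => lt_of_pow_lt_pow_left₀ 2 hε.le ?_⟩
    have := hN n hn
    rw [Real.dist_eq, abs_of_nonneg (sub_nonneg.2 (hsq_mono hn))] at this
    linarith [hdist hn]
  obtain ⟨x, hx⟩ := cauchySeq_tendsto_of_complete hcauchy
  exact ⟨x, mem_iInter.2 fun n =>
    (hcl n).mem_of_tendsto hx (eventually_atTop.2 ⟨n, fun k hk => hmC hk⟩)⟩

lemma IsClosed.image_of_convex_of_isBounded {F : Type*} [NormedAddCommGroup F]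
    [NormedSpace ℝ F] (f : H →L[ℝ] F) {C : Set H} (hcl : IsClosed C) (hconv : Convex ℝ C)
    (hbdd : Bornology.IsBounded C) : IsClosed (f '' C) := by
  refine closure_subset_iff_isClosed.1 fun y hy => ?_
  set D : ℕ → Set H := fun n => C ∩ f ⁻¹' Metric.closedBall y (1 / (n + 1))
  have hDne : ∀ n, (D n).Nonempty := fun n => by
    obtain ⟨_, ⟨c, hc, rfl⟩, hdist⟩ :=
      Metric.mem_closure_iff.1 hy (1 / (n + 1)) Nat.one_div_pos_of_nat
    exact ⟨c, hc, by simpa [dist_comm] using hdist.le⟩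
  have hanti : Antitone D := fun a b hab =>
    inter_subset_inter_right _ <| preimage_mono <|
      Metric.closedBall_subset_closedBall <| Nat.one_div_le_one_div hab
  obtain ⟨c, hc⟩ := hanti.nonempty_iInter_of_isClosed_of_convex hDne
    (fun n => hcl.inter (Metric.isClosed_closedBall.preimage f.continuous))
    (fun n => hconv.inter ((convex_closedBall y _).linear_preimage (f : H →ₗ[ℝ] F)))
    (hbdd.subset inter_subset_left)
  simp only [D, mem_iInter, mem_inter_iff, mem_preimage, Metric.mem_closedBall] at hc
  have hfc : dist (f c) y ≤ 0 :=
    ge_of_tendsto' tendsto_one_div_add_atTop_nhds_zero_nat fun n => (hc n).2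
  exact ⟨c, (hc 0).1, dist_le_zero.1 hfc⟩

end MinimalNorm

theorem stmt_3_general {H : Type*} [NormedAddCommGroup H] [InnerProductSpace ℝ H] [CompleteSpace H]
    (C : Set H) (hCcl : IsClosed C) (hCconv : Convex ℝ C)
    (hCbdd : Bornology.IsBounded C)
    (E : Set H) (k : ℕ) :
    IsClosed (kConvexHullH E k C) :=
  isClosed_biInter fun S _ =>
    (hCcl.image_of_convex_of_isBounded (projCl S) hCconv hCbdd).preimage (projCl S).continuous

/-- For a closed convex bounded set `C` with nonempty interior in a Hilbert space and a
complete orthonormal system `E`, the `k`-convex hull `Q_k(E, C)` is norm closed. -/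
theorem stmt_3 {H : Type*} [NormedAddCommGroup H] [InnerProductSpace ℝ H] [CompleteSpace H]
    (C : Set H) (hCcl : IsClosed C) (hCconv : Convex ℝ C)
    (hCbdd : Bornology.IsBounded C) (hCint : (interior C).Nonempty)
    (E : Set H) (hE : IsCompleteONS E) (k : ℕ) (hk : 0 < k) :
    IsClosed (kConvexHullH E k C) :=
  stmt_3_general C hCcl hCconv hCbdd E k
end

section
/- Let C be a symmetric convex body in a real Hilbert space H. For every δ > 0, there exists a complete orthonormal system 𝐞 in H such that Q_{k-1}(𝐞, C) ⊆ (3 + δ) · Q_k(𝐞, C) for every integer k ≥ 2. -/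
open Set Pointwise

open scoped RealInnerProductSpace

/-!
Build the system by transfinite recursion: while the closed span `K` of the vectors chosen so
far is not all of `H`, `C ⊄ K` because `C` has interior points, and we add a unit vector
`e ⊥ K` along which some `c₀ ∈ C ∩ (K ⊔ ℝ e)` maximizes `⟪·, e⟫` over `C` up to a factor
`θ < 1`. The recursion ends below some ordinal because its terms are distinct.

Given a `k`-set `S` of the system, let `e` be its earliest element. The later vectors
`S \ {e}` are orthogonal to its witness `c₀`; a point `x ∈ Q_{k-1}` agrees with some `c₁ ∈ C`
on `S \ {e}` and with some `c₂ ∈ C` on `e`; and `|⟪c, e⟫| ≤ ⟪c₀, e⟫ / θ` on the symmetric set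
`C`. Hence every `u ∈ span S` satisfies `⟪u, x⟫ ≤ ⟪u, c₁ + (2 / θ) • (± c₀)⟫`, where
`c₁ + (2 / θ) • (± c₀) ∈ (1 + 2 / θ) • C`. Hahn–Banach then puts `P_S x` into `t • P_S(C)`
for every `t > 1 + 2 / θ`, and `θ` close to `1` gives `t = 3 + δ`.
-/

section Convex

variable {E : Type*} [NormedAddCommGroup E] [NormedSpace ℝ E]

theorem Convex.zero_mem_interior_of_neg_eq {A : Set E} (hA : Convex ℝ A) (hA_neg : -A = A)
    (hA_int : (interior A).Nonempty) : (0 : E) ∈ interior A := by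
  obtain ⟨x, hx⟩ := hA_int
  have hx' : -x ∈ interior A := by
    have h := (Homeomorph.neg E).image_interior A
    simp only [Homeomorph.coe_neg, Set.image_neg_eq_neg] at h
    exact hA_neg ▸ h ▸ Set.neg_mem_neg.2 hx
  simpa using hA.interior hx hx' (by norm_num : (0 : ℝ) ≤ 1 / 2)
    (by norm_num : (0 : ℝ) ≤ 1 / 2) (by norm_num)

theorem Convex.mem_smul_of_forall_exists_le_mul {A : Set E} (hA : Convex ℝ A)
    (hA0 : (0 : E) ∈ interior A) {x : E} {μ t : ℝ} (hμ : 0 ≤ μ) (hμt : μ < t)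
    (hx : ∀ f : StrongDual ℝ E, ∃ a ∈ A, f x ≤ μ * f a) : x ∈ t • A := by
  have ht : 0 < t := hμ.trans_lt hμt
  by_contra hxA
  have hx_int : x ∉ t • interior A := fun h => hxA (smul_set_mono interior_subset h)
  obtain ⟨f, hf⟩ := geometric_hahn_banach_open_point (hA.interior.smul t)
    (isOpen_interior.smul₀ ht.ne') hx_int
  obtain ⟨a, ha, hxa⟩ := hx f
  have hshrink : (μ / t) • a ∈ interior A := by
    simpa using hA.combo_interior_self_mem_interior hA0 ha (a := 1 - μ / t) (b := μ / t)
      (by rw [sub_pos, div_lt_one ht]; exact hμt) (by positivity) (by ring)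
  have := hf _ (smul_mem_smul_set hshrink)
  rw [smul_smul, mul_div_cancel₀ _ ht.ne', map_smul, smul_eq_mul] at this
  linarith

end Convex

theorem mem_smul_preimage_image_of_apply_mem {M : Type*} [AddCommGroup M] [Module ℝ M]
    {P : M →ₗ[ℝ] M} (hP : ∀ y, P (P y) = P y) {C : Set M} {t : ℝ} (ht : t ≠ 0) {x : M}
    (hx : P x ∈ t • P ⁻¹' (P '' C)) : x ∈ t • P ⁻¹' (P '' C) := by
  rw [mem_smul_set_iff_inv_smul_mem₀ ht] at hx ⊢
  rwa [mem_preimage, map_smul, hP, ← map_smul] at hx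

section GreedyStep

variable {H : Type*} [NormedAddCommGroup H] [InnerProductSpace ℝ H]

def IsGreedyChoice (C : Set H) (θ : ℝ) (K : Submodule ℝ H) (e : H) : Prop :=
  e ∈ Kᗮ ∧ ‖e‖ = 1 ∧ ∃ c₀ ∈ C, c₀ ∈ K ⊔ ℝ ∙ e ∧ ∀ c ∈ C, θ * ⟪c, e⟫ ≤ ⟪c₀, e⟫

def HasLeadingWitnesses (C : Set H) (θ : ℝ) (E : Set H) : Prop :=
  ∀ S ⊆ E, S.Nonempty → ∃ e ∈ S, ∃ c₀ ∈ C,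
    (∀ f ∈ S, f ≠ e → ⟪f, c₀⟫ = 0) ∧ ∀ c ∈ C, θ * ⟪c, e⟫ ≤ ⟪c₀, e⟫

theorem Submodule.exists_isGreedyChoice (K : Submodule ℝ H) [K.HasOrthogonalProjection]
    {C : Set H} (hC : Bornology.IsBounded C) (hCK : ¬C ⊆ K) {θ : ℝ} (hθ0 : 0 ≤ θ)
    (hθ1 : θ < 1) : ∃ e, IsGreedyChoice C θ K e := by
  set q := Kᗮ.starProjection
  set s := sSup ((‖q ·‖) '' C)
  obtain ⟨R, hR⟩ := isBounded_iff_forall_norm_le.1 hC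
  have hbdd : BddAbove ((‖q ·‖) '' C) :=
    ⟨R, forall_mem_image.2 fun c hc => (Kᗮ.norm_starProjection_apply_le c).trans (hR c hc)⟩
  obtain ⟨c₁, hc₁C, hc₁K⟩ := not_subset.1 hCK
  have hs : 0 < s := by
    refine (norm_pos_iff.2 fun h => hc₁K ?_).trans_le (le_csSup hbdd (mem_image_of_mem _ hc₁C))
    rwa [Kᗮ.starProjection_apply_eq_zero_iff, K.orthogonal_orthogonal] at h
  obtain ⟨_, ⟨c₀, hc₀C, rfl⟩, hc₀⟩ :=
    exists_lt_of_lt_csSup ⟨_, mem_image_of_mem _ hc₁C⟩ (mul_lt_of_lt_one_left hs hθ1)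
  have hq₀ : 0 < ‖q c₀‖ := (mul_nonneg hθ0 hs.le).trans_lt hc₀
  set e := ‖q c₀‖⁻¹ • q c₀
  have he : e ∈ Kᗮ := Kᗮ.smul_mem _ (Kᗮ.starProjection_apply_mem c₀)
  have he1 : ‖e‖ = 1 := norm_smul_inv_norm (norm_pos_iff.1 hq₀)
  have inner_e (c : H) : ⟪c, e⟫ = ⟪q c, e⟫ := by
    rw [Kᗮ.inner_starProjection_left_eq_right, Kᗮ.starProjection_eq_self_iff.2 he]
  refine ⟨e, he, he1, c₀, hc₀C, ?_, fun c hc => ?_⟩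
  · rw [← K.starProjection_add_starProjection_orthogonal c₀]
    refine Submodule.add_mem_sup (K.starProjection_apply_mem c₀) (Submodule.mem_span_singleton.2
      ⟨‖q c₀‖, ?_⟩)
    rw [smul_inv_smul₀ hq₀.ne']
  · have hc₀e : ⟪c₀, e⟫ = ‖q c₀‖ := by
      rw [inner_e, real_inner_smul_right, real_inner_self_eq_norm_sq]
      field_simp
    calc θ * ⟪c, e⟫ = θ * ⟪q c, e⟫ := by rw [inner_e]
      _ ≤ θ * s := by
        gcongr
        calc ⟪q c, e⟫ ≤ ‖q c‖ * ‖e‖ := real_inner_le_norm _ _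
          _ ≤ s := by
            rw [he1, mul_one]
            exact le_csSup hbdd (mem_image_of_mem _ hc)
      _ ≤ ⟪c₀, e⟫ := hc₀e ▸ hc₀.le

end GreedyStep

universe u

section Greedy

variable {H : Type u} [NormedAddCommGroup H] [InnerProductSpace ℝ H] {C : Set H} {θ : ℝ}

variable (C θ) in
/-- Once the span of the earlier terms is dense there is no greedy choice and the term is junk;
only the terms before that stage are used. -/
noncomputable def greedySeq (α : Ordinal.{u}) : H :=
  Classical.epsilon <| IsGreedyChoice C θ
    (Submodule.span ℝ (range fun β : Iio α => greedySeq β.1)).topologicalClosure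
termination_by α
decreasing_by exact β.2

variable (C θ) in
noncomputable abbrev greedySpan (α : Ordinal.{u}) : Submodule ℝ H :=
  (Submodule.span ℝ (greedySeq C θ '' Iio α)).topologicalClosure

theorem greedySpan_sup_le {α β : Ordinal.{u}} (h : α < β) :
    greedySpan C θ α ⊔ ℝ ∙ greedySeq C θ α ≤ greedySpan C θ β :=
  sup_le (Submodule.topologicalClosure_mono <| Submodule.span_mono <| image_mono <|
      Iio_subset_Iio h.le)
    ((Submodule.span_singleton_le_iff_mem _ _).2
      (Submodule.le_topologicalClosure _ (Submodule.subset_span ⟨α, h, rfl⟩)))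

theorem isGreedyChoice_greedySeq [CompleteSpace H] (hC : Bornology.IsBounded C)
    (hC_int : (interior C).Nonempty) (hθ0 : 0 ≤ θ) (hθ1 : θ < 1) {α : Ordinal.{u}}
    (hα : greedySpan C θ α ≠ ⊤) :
    IsGreedyChoice C θ (greedySpan C θ α) (greedySeq C θ α) := by
  rw [greedySeq, ← image_eq_range]
  refine Classical.epsilon_spec ((greedySpan C θ α).exists_isGreedyChoice hC
    (fun hCK => hα ?_) hθ0 hθ1)
  exact (greedySpan C θ α).eq_top_of_nonempty_interior' (hC_int.mono (interior_mono hCK))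

theorem inner_greedySeq_eq_zero {α β : Ordinal.{u}} (hαβ : α < β)
    (hβ : IsGreedyChoice C θ (greedySpan C θ β) (greedySeq C θ β)) {c : H}
    (hc : c ∈ greedySpan C θ α ⊔ ℝ ∙ greedySeq C θ α) : ⟪c, greedySeq C θ β⟫ = 0 :=
  Submodule.inner_right_of_mem_orthogonal (greedySpan_sup_le hαβ hc) hβ.1

theorem exists_greedySpan_eq_top [CompleteSpace H] (hC : Bornology.IsBounded C)
    (hC_int : (interior C).Nonempty) (hθ0 : 0 ≤ θ) (hθ1 : θ < 1) :
    ∃ o : Ordinal.{u}, greedySpan C θ o = ⊤ := by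
  by_contra! h
  have hgreedy (α) := isGreedyChoice_greedySeq hC hC_int hθ0 hθ1 (h α)
  refine not_injective_of_ordinal (greedySeq C θ) fun α β hαβ => ?_
  by_contra hne
  wlog hlt : α < β generalizing α β
  · exact this β α hαβ.symm (Ne.symm hne) ((Ne.symm hne).lt_of_le (not_lt.1 hlt))
  have h0 := inner_greedySeq_eq_zero hlt (hgreedy β)
    (Submodule.mem_sup_right (Submodule.mem_span_singleton_self _))
  rw [hαβ, real_inner_self_eq_norm_sq, (hgreedy β).2.1] at h0
  norm_num at h0

theorem exists_isCompleteONS_hasLeadingWitnesses [CompleteSpace H]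
    (hC : Bornology.IsBounded C) (hC_int : (interior C).Nonempty) (hθ0 : 0 ≤ θ) (hθ1 : θ < 1) :
    ∃ E : Set H, IsCompleteONS E ∧ HasLeadingWitnesses C θ E := by
  classical
  set v := greedySeq C θ
  set o := sInf {α | greedySpan C θ α = ⊤}
  have hgreedy (β) (hβ : β < o) : IsGreedyChoice C θ (greedySpan C θ β) (v β) :=
    isGreedyChoice_greedySeq hC hC_int hθ0 hθ1
      (notMem_of_lt_csInf' (s := {α | greedySpan C θ α = ⊤}) hβ)
  have horth {α β} (hαβ : α < β) (hβ : β < o) : ⟪v α, v β⟫ = 0 :=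
    inner_greedySeq_eq_zero hαβ (hgreedy β hβ)
      (Submodule.mem_sup_right (Submodule.mem_span_singleton_self _))
  refine ⟨v '' Iio o, ⟨?_, csInf_mem (exists_greedySpan_eq_top hC hC_int hθ0 hθ1)⟩, ?_⟩
  · rw [orthonormal_subtype_iff_ite]
    rintro _ ⟨α, hα, rfl⟩ _ ⟨β, hβ, rfl⟩
    split_ifs with h
    · rw [h, real_inner_self_eq_norm_sq, (hgreedy β hβ).2.1, one_pow]
    · rcases lt_or_gt_of_ne (ne_of_apply_ne v h) with hlt | hlt
      · exact horth hlt hβ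
      · rw [real_inner_comm]; exact horth hlt hα
  · rintro S hS ⟨_, hf⟩
    obtain ⟨β, hβ, rfl⟩ := hS hf
    have hB : (Iio o ∩ v ⁻¹' S).Nonempty := ⟨β, hβ, hf⟩
    obtain ⟨hα, hαS⟩ := csInf_mem hB
    obtain ⟨-, -, c₀, hc₀C, hc₀K, hmax⟩ := hgreedy _ hα
    refine ⟨_, hαS, c₀, hc₀C, fun f hf hne => ?_, hmax⟩
    obtain ⟨γ, hγ, rfl⟩ := hS hf
    have hlt : sInf (Iio o ∩ v ⁻¹' S) < γ :=
      (csInf_le' (show γ ∈ Iio o ∩ v ⁻¹' S from ⟨hγ, hf⟩)).lt_of_ne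
        (by rintro rfl; exact hne rfl)
    rw [real_inner_comm]
    exact inner_greedySeq_eq_zero hlt (hgreedy γ hγ) hc₀K

end Greedy

section Hull

variable {H : Type*} [NormedAddCommGroup H] [InnerProductSpace ℝ H]

theorem abs_inner_le_of_nearly_maximizing {C : Set H} (hC_neg : -C = C) {θ : ℝ} {e c₀ : H}
    (hmax : ∀ c ∈ C, θ * ⟪c, e⟫ ≤ ⟪c₀, e⟫) {c : H} (hc : c ∈ C) : θ * |⟪c, e⟫| ≤ ⟪c₀, e⟫ := by
  have hneg := hmax (-c) (hC_neg ▸ neg_mem_neg.2 hc)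
  rw [inner_neg_left] at hneg
  rcases abs_cases ⟪c, e⟫ with ⟨h, -⟩ | ⟨h, -⟩ <;> rw [h] <;> linarith [hmax c hc]

theorem exists_inner_le_of_nearly_maximizing {C : Set H} (hC : Convex ℝ C) (hC_neg : -C = C)
    {θ : ℝ} (hθ : 0 < θ) {e c₀ c₁ c₂ v x : H} (hc₀ : c₀ ∈ C) (hc₁ : c₁ ∈ C) (hc₂ : c₂ ∈ C)
    (hmax : ∀ c ∈ C, θ * ⟪c, e⟫ ≤ ⟪c₀, e⟫) (hv₀ : ⟪v, c₀⟫ = 0) (hv₁ : ⟪v, x⟫ = ⟪v, c₁⟫)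
    (he₂ : ⟪e, x⟫ = ⟪e, c₂⟫) (a : ℝ) :
    ∃ c ∈ C, ⟪a • e + v, x⟫ ≤ (1 + 2 / θ) * ⟪a • e + v, c⟫ := by
  set u := a • e + v
  obtain ⟨c₃, hc₃, hc₃u⟩ : ∃ c₃ ∈ C, ⟪u, c₃⟫ = |a| * ⟪c₀, e⟫ := by
    have hu₀ : ⟪u, c₀⟫ = a * ⟪c₀, e⟫ := by
      rw [inner_add_left, real_inner_smul_left, hv₀, add_zero, real_inner_comm]
    rcases abs_cases a with ⟨ha, -⟩ | ⟨ha, -⟩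
    · exact ⟨c₀, hc₀, by rw [hu₀, ha]⟩
    · exact ⟨-c₀, hC_neg ▸ neg_mem_neg.2 hc₀, by rw [inner_neg_right, hu₀, ha, neg_mul]⟩
  have hle : ⟪u, x⟫ ≤ ⟪u, c₁ + (2 / θ) • c₃⟫ := by
    have h₁ := abs_inner_le_of_nearly_maximizing hC_neg hmax hc₁
    have h₂ := abs_inner_le_of_nearly_maximizing hC_neg hmax hc₂
    have hdiff : a * (⟪c₂, e⟫ - ⟪c₁, e⟫) ≤ |a| * (2 / θ * ⟪c₀, e⟫) := by
      calc a * (⟪c₂, e⟫ - ⟪c₁, e⟫) ≤ |a| * (|⟪c₂, e⟫| + |⟪c₁, e⟫|) := by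
            refine (le_abs_self _).trans ?_
            rw [abs_mul]
            exact mul_le_mul_of_nonneg_left (abs_sub _ _) (abs_nonneg a)
        _ ≤ |a| * (2 / θ * ⟪c₀, e⟫) := by
            gcongr
            rw [div_mul_eq_mul_div, le_div_iff₀ hθ]
            linarith
    rw [inner_add_right, real_inner_smul_right, hc₃u]
    simp only [u, inner_add_left, real_inner_smul_left, hv₁, he₂, real_inner_comm c₁ e,
      real_inner_comm c₂ e]
    linarith
  obtain ⟨c, hc, hc_eq : (1 + 2 / θ) • c = _⟩ : c₁ + (2 / θ) • c₃ ∈ (1 + 2 / θ) • C := by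
    rw [hC.add_smul zero_le_one (by positivity), one_smul]
    exact add_mem_add hc₁ (smul_mem_smul_set hc₃)
  refine ⟨c, hc, ?_⟩
  rwa [← real_inner_smul_right, hc_eq]

variable [CompleteSpace H]

theorem inner_eq_of_projCl_eq {T : Set H} {x y : H} (h : projCl T x = projCl T y) {w : H}
    (hw : w ∈ Submodule.span ℝ T) : ⟪w, x⟫ = ⟪w, y⟫ := by
  set K := (Submodule.span ℝ T).topologicalClosure
  have hwK := K.starProjection_eq_self_iff.2 (Submodule.le_topologicalClosure _ hw)
  rw [← hwK, K.inner_starProjection_left_eq_right, K.inner_starProjection_left_eq_right]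
  exact congrArg _ h

theorem exists_inner_eq_of_mem_kConvexHullH {E C : Set H} {k : ℕ} {x : H}
    (hx : x ∈ kConvexHullH E k C) {T : Set H} (hTE : T ⊆ E) (hT : T.Finite) (hTk : T.ncard = k) :
    ∃ c ∈ C, ∀ w ∈ Submodule.span ℝ T, ⟪w, x⟫ = ⟪w, c⟫ := by
  obtain ⟨c, hc, hcx⟩ := mem_iInter₂.1 hx T ⟨hTE, hT, hTk⟩
  exact ⟨c, hc, fun w hw => inner_eq_of_projCl_eq hcx.symm hw⟩

theorem exists_inner_le_of_mem_kConvexHullH {E C : Set H} (hC : Convex ℝ C) (hC_neg : -C = C)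
    {θ : ℝ} (hθ : 0 < θ)
    (hE : HasLeadingWitnesses C θ E)
    {k : ℕ} (hk : 2 ≤ k) {x : H} (hx : x ∈ kConvexHullH E (k - 1) C) {S : Set H} (hSE : S ⊆ E)
    (hS : S.Finite) (hSk : S.ncard = k) {u : H} (hu : u ∈ Submodule.span ℝ S) :
    ∃ c ∈ C, ⟪u, x⟫ ≤ (1 + 2 / θ) * ⟪u, c⟫ := by
  obtain ⟨e, heS, c₀, hc₀, hc₀S, hmax⟩ := hE S hSE (nonempty_of_ncard_ne_zero (by omega))
  have hS'k : (S \ {e}).ncard = k - 1 := by rw [ncard_sdiff_singleton_of_mem heS, hSk]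
  obtain ⟨c₁, hc₁, hxc₁⟩ :=
    exists_inner_eq_of_mem_kConvexHullH hx (sdiff_subset.trans hSE) hS.sdiff hS'k
  obtain ⟨f, hfS, hfe⟩ : (S \ {e}).Nonempty := nonempty_of_ncard_ne_zero (by omega)
  obtain ⟨c₂, hc₂, hxc₂⟩ := exists_inner_eq_of_mem_kConvexHullH hx (sdiff_subset.trans hSE)
    hS.sdiff (by rw [ncard_sdiff_singleton_of_mem hfS, hSk])
  have he₂ := hxc₂ e (Submodule.subset_span ⟨heS, Ne.symm hfe⟩)
  rw [← insert_eq_of_mem heS, ← insert_sdiff_singleton, Submodule.mem_span_insert] at hu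
  obtain ⟨a, v, hv, rfl⟩ := hu
  have hv₀ : ⟪v, c₀⟫ = 0 := Submodule.mem_orthogonal_singleton_iff_inner_left.1 <|
    Submodule.span_le.2 (fun f hf =>
      Submodule.mem_orthogonal_singleton_iff_inner_left.2 (hc₀S f hf.1 hf.2)) hv
  exact exists_inner_le_of_nearly_maximizing hC hC_neg hθ hc₀ hc₁ hc₂ hmax hv₀ (hxc₁ v hv) he₂ a

theorem kConvexHullH_sub_one_subset_smul {E C : Set H} (hC : Convex ℝ C) (hC_neg : -C = C)
    (hC0 : (0 : H) ∈ interior C) {θ t : ℝ} (hθ : 0 < θ) (ht : 1 + 2 / θ < t)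
    (hE : HasLeadingWitnesses C θ E)
    {k : ℕ} (hk : 2 ≤ k) : kConvexHullH E (k - 1) C ⊆ t • kConvexHullH E k C := by
  have ht0 : t ≠ 0 := (by positivity : (0 : ℝ) < 1 + 2 / θ).trans ht |>.ne'
  intro x hx
  rw [mem_smul_set_iff_inv_smul_mem₀ ht0]
  refine mem_iInter₂.2 fun S ⟨hSE, hS, hSk⟩ => ?_
  rw [← mem_smul_set_iff_inv_smul_mem₀ ht0]
  set K := (Submodule.span ℝ S).topologicalClosure
  change x ∈ t • K.starProjection ⁻¹' (K.starProjection '' C)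
  have hPP (y : H) : K.starProjection (K.starProjection y) = K.starProjection y :=
    K.starProjection_eq_self_iff.2 (K.starProjection_apply_mem y)
  refine mem_smul_preimage_image_of_apply_mem (P := K.starProjection.toLinearMap) hPP ht0 ?_
  refine ((hC.linear_image _).linear_preimage _).mem_smul_of_forall_exists_le_mul
    (interior_mono (subset_preimage_image _ C) hC0) (by positivity) ht fun f => ?_
  set w := (InnerProductSpace.toDual ℝ H).symm f
  have hK : K = Submodule.span ℝ S :=
    haveI := FiniteDimensional.span_of_finite ℝ hS
    (Submodule.span ℝ S).closed_of_finiteDimensional.submodule_topologicalClosure_eq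
  obtain ⟨c, hc, hle⟩ := exists_inner_le_of_mem_kConvexHullH hC hC_neg hθ hE hk hx hSE hS hSk
    (by rw [← hK]; exact K.starProjection_apply_mem w)
  refine ⟨K.starProjection c, ⟨c, hc, (hPP c).symm⟩, ?_⟩
  simp only [ContinuousLinearMap.coe_coe, ← InnerProductSpace.toDual_symm_apply]
  rwa [← K.inner_starProjection_left_eq_right, ← K.inner_starProjection_left_eq_right]

end Hull

theorem stmt_4_general {H : Type*} [NormedAddCommGroup H] [InnerProductSpace ℝ H] [CompleteSpace H]
    (C : Set H) (hCconv : Convex ℝ C)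
    (hCbdd : Bornology.IsBounded C) (hCint : (interior C).Nonempty) (hCsym : C = -C)
    (δ : ℝ) (hδ : 0 < δ) :
    ∃ E : Set H, IsCompleteONS E ∧
      ∀ k : ℕ, 2 ≤ k →
        kConvexHullH E (k - 1) C ⊆ (3 + δ) • kConvexHullH E k C := by
  -- `θ = 4 / (4 + δ)` makes `1 + 2 / θ = 3 + δ / 2`.
  obtain ⟨E, hE, hE_lead⟩ := exists_isCompleteONS_hasLeadingWitnesses hCbdd hCint
    (θ := 4 / (4 + δ)) (by positivity) (by rw [div_lt_one (by positivity)]; linarith)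
  refine ⟨E, hE, fun k hk => kConvexHullH_sub_one_subset_smul hCconv hCsym.symm
    (hCconv.zero_mem_interior_of_neg_eq hCsym.symm hCint) (by positivity) ?_ hE_lead hk⟩
  rw [div_div_eq_mul_div]
  linarith

/-- For every symmetric convex body `C` in a Hilbert space `H` and every `δ > 0` there
is a complete orthonormal system `E` such that `Q_{k-1}(E, C) ⊆ (3 + δ) • Q_k(E, C)` for
every integer `k ≥ 2`. -/
theorem stmt_4 {H : Type*} [NormedAddCommGroup H] [InnerProductSpace ℝ H] [CompleteSpace H]
    (C : Set H) (hCcl : IsClosed C) (hCconv : Convex ℝ C)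
    (hCbdd : Bornology.IsBounded C) (hCint : (interior C).Nonempty) (hCsym : C = -C)
    (δ : ℝ) (hδ : 0 < δ) :
    ∃ E : Set H, IsCompleteONS E ∧
      ∀ k : ℕ, 2 ≤ k →
        kConvexHullH E (k - 1) C ⊆ (3 + δ) • kConvexHullH E k C :=
  stmt_4_general C hCconv hCbdd hCint hCsym δ hδ
end

section
/- For every integer n ≥ 2, every symmetric convex body K ⊂ ℝⁿ and every k ∈ {1, …, n}, one has (Q_k(K))° = R_k(K°), where A° denotes the polar of A. -/
open Set RealInnerProductSpace

/-- The coordinate subspace `F(S) = span {e_j : j ∈ S}` of `ℝⁿ`, as a set. -/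
noncomputable def coordSubspace {n : ℕ} (S : Finset (Fin n)) :
    Set (EuclideanSpace ℝ (Fin n)) :=
  ↑(Submodule.span ℝ ((fun j => EuclideanSpace.single j (1 : ℝ)) '' (S : Set (Fin n))))

/-- The `k`-cross approximation of a set `K ⊆ ℝⁿ`. -/
noncomputable def kCross (n k : ℕ) (K : Set (EuclideanSpace ℝ (Fin n))) :
    Set (EuclideanSpace ℝ (Fin n)) :=
  convexHull ℝ (K ∩ ⋃ S ∈ {S : Finset (Fin n) | S.card = k}, coordSubspace S)

/-- The polar of a set `A ⊆ ℝⁿ`. -/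
def polarSet {n : ℕ} (A : Set (EuclideanSpace ℝ (Fin n))) : Set (EuclideanSpace ℝ (Fin n)) :=
  {x | ∀ y ∈ A, ⟪x, y⟫ ≤ 1}

/-!
Polarity turns the cylinder `P_S⁻¹(P_S K)` over a coordinate subspace into the section
`K° ∩ F(S)`, and turns an intersection into the convex hull of the union of the polars. Hence,
by the bipolar theorem applied to each cylinder, `(R_k(K°))° = Q_k(K)`. As `0 ∈ int K` by
symmetry, `K°` is compact, so `R_k(K°)` is a compact convex set containing `0`, and the bipolar
theorem applied once more gives `(Q_k(K))° = R_k(K°)`.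
-/

section TopologicalVectorSpace

variable {V : Type*} [AddCommGroup V] [Module ℝ V] [TopologicalSpace V]

theorem Convex.zero_mem_interior_of_neg_eq_s5 [IsTopologicalAddGroup V] [ContinuousConstSMul ℝ V]
    {K : Set V} (hK : Convex ℝ K) (hKsym : K = -K) (hKint : (interior K).Nonempty) :
    (0 : V) ∈ interior K := by
  obtain ⟨x, hx⟩ := hKint
  have hnx : -x ∈ interior K :=
    interior_maximal (by simpa [← hKsym] using Set.neg_subset_neg.mpr (interior_subset (s := K)))
      isOpen_interior.neg (Set.neg_mem_neg.mpr hx)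
  simpa using hK.interior hx hnx (by norm_num : (0 : ℝ) ≤ 1 / 2) (by norm_num : (0 : ℝ) ≤ 1 / 2)
    (by norm_num)

variable [ContinuousAdd V] [ContinuousSMul ℝ V]

theorem IsCompact.convexJoin {s t : Set V} (hs : IsCompact s) (ht : IsCompact t) :
    IsCompact (_root_.convexJoin ℝ s t) := by
  have : _root_.convexJoin ℝ s t =
      (fun p : ℝ × V × V => (1 - p.1) • p.2.1 + p.1 • p.2.2) '' (Icc 0 1 ×ˢ s ×ˢ t) := by
    ext x
    simp only [mem_convexJoin, segment_eq_image, mem_image, mem_prod, Prod.exists]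
    constructor
    · rintro ⟨a, ha, b, hb, θ, hθ, rfl⟩
      exact ⟨θ, a, b, ⟨hθ, ha, hb⟩, rfl⟩
    · rintro ⟨θ, a, b, ⟨hθ, ha, hb⟩, rfl⟩
      exact ⟨a, ha, b, hb, θ, hθ, rfl⟩
  rw [this]
  exact (isCompact_Icc.prod (hs.prod ht)).image (by fun_prop)

theorem isCompact_convexHull_union {s t : Set V} (hs : IsCompact (convexHull ℝ s))
    (ht : IsCompact (convexHull ℝ t)) : IsCompact (convexHull ℝ (s ∪ t)) := by
  rcases s.eq_empty_or_nonempty with rfl | hs₀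
  · simpa using ht
  rcases t.eq_empty_or_nonempty with rfl | ht₀
  · simpa using hs
  rw [convexHull_union hs₀ ht₀]
  exact hs.convexJoin ht

theorem isCompact_convexHull_biUnion {ι : Type*} (F : Finset ι) {A : ι → Set V}
    (hA : ∀ i ∈ F, IsCompact (convexHull ℝ (A i))) :
    IsCompact (convexHull ℝ (⋃ i ∈ F, A i)) := by
  classical
  induction F using Finset.induction_on with
  | empty => simp
  | insert a F _ ih =>
    rw [Finset.set_biUnion_insert]
    exact isCompact_convexHull_union (hA a (F.mem_insert_self a))
      (ih fun i hi => hA i (Finset.mem_insert_of_mem hi))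

end TopologicalVectorSpace

section EuclideanCoordinates

variable {n : ℕ}

local notation "E" => EuclideanSpace ℝ (Fin n)

theorem polarSet_anti {A B : Set E} (h : A ⊆ B) : polarSet B ⊆ polarSet A :=
  fun _ hx y hy => hx y (h hy)

theorem zero_mem_polarSet (A : Set E) : (0 : E) ∈ polarSet A := by
  simp [polarSet]

theorem convex_polarSet (A : Set E) : Convex ℝ (polarSet A) := by
  intro x hx y hy a b ha hb hab z hz
  calc ⟪a • x + b • y, z⟫ = a * ⟪x, z⟫ + b * ⟪y, z⟫ := by
        rw [inner_add_left, real_inner_smul_left, real_inner_smul_left]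
    _ ≤ a * 1 + b * 1 := by gcongr; exacts [hx z hz, hy z hz]
    _ = 1 := by linarith

theorem isClosed_polarSet (A : Set E) : IsClosed (polarSet A) := by
  simp only [polarSet, ofPred_forall]
  exact isClosed_biInter fun y _ => isClosed_le (by fun_prop) continuous_const

theorem polarSet_iUnion₂ {ι : Type*} (T : Set ι) (A : ι → Set E) :
    polarSet (⋃ i ∈ T, A i) = ⋂ i ∈ T, polarSet (A i) := by
  ext x
  simp only [polarSet, mem_ofPred_eq, mem_iUnion, mem_iInter]
  grind

theorem polarSet_convexHull (A : Set E) : polarSet (convexHull ℝ A) = polarSet A := by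
  refine (polarSet_anti (subset_convexHull ℝ A)).antisymm fun x hx y hy => ?_
  have hhalf : Convex ℝ {y : E | ⟪x, y⟫ ≤ 1} :=
    convex_halfSpace_le (innerₛₗ ℝ x).isLinear 1
  exact convexHull_min (fun z hz => hx z hz) hhalf hy

theorem polarSet_polarSet {A : Set E} (hA : IsClosed A) (hconv : Convex ℝ A) (h0 : (0 : E) ∈ A) :
    polarSet (polarSet A) = A := by
  refine Subset.antisymm (fun x hx => ?_) fun a ha y hy => real_inner_comm a y ▸ hy a ha
  by_contra hxA
  obtain ⟨f, u, hfA, hfx⟩ := geometric_hahn_banach_closed_point hconv hA hxA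
  have hu : 0 < u := by simpa using hfA 0 h0
  -- the separating functional, rescaled to take the value `1` on the separating hyperplane
  set v : E := u⁻¹ • (InnerProductSpace.toDual ℝ E).symm f
  have hv : ∀ y, ⟪v, y⟫ = u⁻¹ * f y := fun y => by
    rw [real_inner_smul_left, InnerProductSpace.toDual_symm_apply]
  have hvA : v ∈ polarSet A := fun y hy => by
    rw [hv, inv_mul_le_iff₀ hu, mul_one]
    exact (hfA y hy).le
  have hvx := hx v hvA
  rw [real_inner_comm, hv, inv_mul_le_iff₀ hu, mul_one] at hvx
  exact absurd hfx hvx.not_gt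

theorem isCompact_polarSet {K : Set E} (h0 : (0 : E) ∈ interior K) :
    IsCompact (polarSet K) := by
  obtain ⟨ε, hε, hball⟩ := Metric.mem_nhds_iff.mp (mem_interior_iff_mem_nhds.mp h0)
  refine Metric.isCompact_of_isClosed_isBounded (isClosed_polarSet K) ?_
  refine (Metric.isBounded_iff_subset_closedBall 0).mpr ⟨2 / ε, fun x hx => ?_⟩
  rw [Metric.mem_closedBall, dist_zero_right, le_div_iff₀ hε]
  rcases eq_or_ne x 0 with rfl | hx0
  · simp
  have hxn : 0 < ‖x‖ := norm_pos_iff.mpr hx0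
  -- test `x` against the point of norm `ε / 2` in its own direction
  have hy : (ε / 2 / ‖x‖) • x ∈ K := hball <| by
    rw [Metric.mem_ball, dist_zero_right, norm_smul, Real.norm_of_nonneg (by positivity),
      div_mul_cancel₀ _ hxn.ne']
    linarith
  have hxy := hx _ hy
  rw [real_inner_smul_right, real_inner_self_eq_norm_sq] at hxy
  have hcancel : ε / 2 / ‖x‖ * ‖x‖ ^ 2 = ε / 2 * ‖x‖ := by field_simp
  nlinarith

section Coordinates

variable (S : Finset (Fin n))

theorem coordProj_apply (x : E) (j : Fin n) : coordProj S x j = if j ∈ S then x j else 0 := rfl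

noncomputable def coordProjₗ : E →ₗ[ℝ] E where
  toFun := coordProj S
  map_add' x y := by
    ext j
    simp only [coordProj_apply, PiLp.add_apply]
    split_ifs <;> simp
  map_smul' c x := by
    ext j
    simp only [coordProj_apply, PiLp.smul_apply, smul_eq_mul, RingHom.id_apply]
    split_ifs <;> simp

theorem continuous_coordProj : Continuous (coordProj S) :=
  (coordProjₗ S).continuous_of_finiteDimensional

theorem inner_coordProj_left (x y : E) : ⟪coordProj S x, y⟫ = ⟪x, coordProj S y⟫ := by
  simp only [PiLp.inner_apply, coordProj_apply]
  refine Finset.sum_congr rfl fun j _ => ?_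
  split_ifs <;> simp

theorem mem_coordSubspace_iff {x : E} : x ∈ coordSubspace S ↔ ∀ j ∉ S, x j = 0 := by
  have hbasis : (fun j => EuclideanSpace.single j (1 : ℝ)) =
      ⇑(EuclideanSpace.basisFun (Fin n) ℝ).toBasis := by
    ext1 j; simp
  rw [coordSubspace, hbasis, SetLike.mem_coe, Module.Basis.mem_span_image]
  simp only [Finset.coe_subset, Finset.subset_iff, Finsupp.mem_support_iff,
    OrthonormalBasis.coe_toBasis_repr_apply, EuclideanSpace.basisFun_repr]
  exact forall_congr' fun j => not_imp_comm

theorem coordProj_eq_self {x : E} (hx : x ∈ coordSubspace S) : coordProj S x = x := by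
  ext j
  rw [coordProj_apply]
  split_ifs with hj
  · rfl
  · exact ((mem_coordSubspace_iff S).mp hx j hj).symm

theorem coordProj_single_of_notMem {j : Fin n} (hj : j ∉ S) (t : ℝ) :
    coordProj S (EuclideanSpace.single j t) = 0 := by
  ext i
  rw [coordProj_apply]
  split_ifs with hi
  · simp [show i ≠ j from fun h => hj (h ▸ hi)]
  · rfl

end Coordinates

section CoordinateCylinders

variable {K : Set (EuclideanSpace ℝ (Fin n))} (S : Finset (Fin n))

theorem isClosed_coordProj_preimage_image (hK : IsCompact K) :
    IsClosed (coordProj S ⁻¹' (coordProj S '' K)) :=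
  (hK.image (continuous_coordProj S)).isClosed.preimage (continuous_coordProj S)

theorem convex_coordProj_preimage_image (hK : Convex ℝ K) :
    Convex ℝ (coordProj S ⁻¹' (coordProj S '' K)) :=
  (hK.linear_image (coordProjₗ S)).linear_preimage (coordProjₗ S)

theorem polarSet_coordProj_preimage_image (h0 : (0 : E) ∈ K) :
    polarSet (coordProj S ⁻¹' (coordProj S '' K)) = polarSet K ∩ coordSubspace S := by
  refine Subset.antisymm (fun x hx => ⟨fun y hy => hx y ⟨y, hy, rfl⟩, ?_⟩) ?_
  · refine (mem_coordSubspace_iff S).mpr fun j hj => ?_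
    -- the whole line `ℝ e_j` lies in the cylinder, and `x` is bounded above on it
    have hline : ∀ t : ℝ, t * x j ≤ 1 := fun t => by
      have := hx (EuclideanSpace.single j t)
        ⟨0, h0, by rw [coordProj_single_of_notMem S hj]; exact map_zero (coordProjₗ S)⟩
      simpa [EuclideanSpace.inner_single_right] using this
    by_contra hxj
    have := hline (2 / x j)
    rw [div_mul_cancel₀ _ hxj] at this
    norm_num at this
  · rintro x ⟨hxK, hxS⟩ y ⟨z, hzK, hzy⟩
    calc ⟪x, y⟫ = ⟪x, z⟫ := by
          rw [← coordProj_eq_self S hxS, inner_coordProj_left, inner_coordProj_left, hzy]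
      _ ≤ 1 := hxK z hzK

theorem polarSet_polarSet_inter_coordSubspace (hKc : IsCompact K) (hK : Convex ℝ K)
    (h0 : (0 : E) ∈ K) :
    polarSet (polarSet K ∩ coordSubspace S) = coordProj S ⁻¹' (coordProj S '' K) := by
  rw [← polarSet_coordProj_preimage_image S h0]
  exact polarSet_polarSet (isClosed_coordProj_preimage_image S hKc)
    (convex_coordProj_preimage_image S hK) ⟨0, h0, rfl⟩

end CoordinateCylinders

section CrossApproximation

variable {k : ℕ} {L : Set (EuclideanSpace ℝ (Fin n))}

theorem polarSet_kCross_polarSet {K : Set E} (hKc : IsCompact K) (hK : Convex ℝ K)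
    (h0 : (0 : E) ∈ K) : polarSet (kCross n k (polarSet K)) = kConvexHull n k K := by
  rw [kCross, inter_iUnion₂, polarSet_convexHull, polarSet_iUnion₂, kConvexHull]
  simp only [polarSet_polarSet_inter_coordSubspace _ hKc hK h0]

theorem isCompact_kCross (hLc : IsCompact L) (hL : Convex ℝ L) : IsCompact (kCross n k L) := by
  have hindex : {S : Finset (Fin n) | S.card = k} =
      ↑((Finset.univ : Finset (Fin n)).powersetCard k) := by
    ext S; simp
  rw [kCross, inter_iUnion₂, hindex, Finset.set_biUnion_coe]
  refine isCompact_convexHull_biUnion _ fun S _ => ?_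
  have hSc : IsClosed (coordSubspace S) := Submodule.closed_of_finiteDimensional _
  have hS : Convex ℝ (coordSubspace S) := Submodule.convex _
  rw [(hL.inter hS).convexHull_eq]
  exact hLc.inter_right hSc

theorem zero_mem_kCross (hk : k ≤ n) (h0 : (0 : E) ∈ L) : (0 : E) ∈ kCross n k L := by
  obtain ⟨S, -, hS⟩ :=
    Finset.exists_subset_card_eq (s := (Finset.univ : Finset (Fin n))) (by simpa using hk)
  refine subset_convexHull ℝ _ ⟨h0, mem_iUnion₂.mpr ⟨S, hS, ?_⟩⟩
  exact Submodule.zero_mem _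

end CrossApproximation

end EuclideanCoordinates

theorem stmt_5_general (n : ℕ) (K : Set (EuclideanSpace ℝ (Fin n)))
    (hKcomp : IsCompact K) (hKconv : Convex ℝ K) (hKint : (interior K).Nonempty)
    (hKsym : K = -K) (k : ℕ) (hkn : k ≤ n) :
    polarSet (kConvexHull n k K) = kCross n k (polarSet K) := by
  have h0 : (0 : EuclideanSpace ℝ (Fin n)) ∈ interior K :=
    hKconv.zero_mem_interior_of_neg_eq_s5 hKsym hKint
  rw [← polarSet_kCross_polarSet hKcomp hKconv (interior_subset h0)]
  exact polarSet_polarSet (isCompact_kCross (isCompact_polarSet h0) (convex_polarSet K)).isClosed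
    (convex_convexHull ℝ _) (zero_mem_kCross hkn (zero_mem_polarSet K))

/-- For every `n ≥ 2`, every symmetric convex body `K ⊆ ℝⁿ` and every `k ∈ {1, …, n}`,
`(Q_k(K))° = R_k(K°)`. -/
theorem stmt_5 (n : ℕ) (hn : 2 ≤ n) (K : Set (EuclideanSpace ℝ (Fin n)))
    (hKcomp : IsCompact K) (hKconv : Convex ℝ K) (hKint : (interior K).Nonempty)
    (hKsym : K = -K) (k : ℕ) (hk1 : 1 ≤ k) (hkn : k ≤ n) :
    polarSet (kConvexHull n k K) = kCross n k (polarSet K) :=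
  stmt_5_general n K hKcomp hKconv hKint hKsym k hkn
end

section
/- Let H be a real Hilbert space with dim H ≥ 2, let e be a unit vector in H, let η ∈ [0, 1) and let L ⊂ H be a symmetric convex body such that ρ_L(e) ≥ (1 − η)‖L‖. Then (1 − η)·L ⊆ (L ∩ span{e}) + 2·(L ∩ e^⊥), where + denotes the Minkowski sum and e^⊥ is the orthogonal complement of span{e}. -/
/-!
Since `L` is convex and symmetric it is balanced, and since it is closed the supremum defining
`ρ_L(e)` is attained, so the whole segment `[-ρ_L(e) e, ρ_L(e) e]` lies in `L`. For `x ∈ L` put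
`c = ⟪e, x⟫`; then `|(1 - η) c| ≤ (1 - η) ‖L‖ ≤ ρ_L(e)`, so `a = (1 - η) c e ∈ L ∩ span{e}`,
and `b = ((1 - η) x - a) / 2`, the midpoint of `(1 - η) x` and `-a`, lies in `L ∩ e^⊥`.
Hence `(1 - η) x = a + 2 b`.
-/

open Set Pointwise

/-- The radial function of a set `L`: `ρ_L(u) = max {t ≥ 0 : t • u ∈ L}`. -/
noncomputable def radialFn {H : Type*} [NormedAddCommGroup H] [InnerProductSpace ℝ H]
    (L : Set H) (u : H) : ℝ :=
  sSup {t : ℝ | 0 ≤ t ∧ t • u ∈ L}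

/-- `‖L‖ = sup_{x ∈ L} ‖x‖`. -/
noncomputable def setNorm {H : Type*} [NormedAddCommGroup H] [InnerProductSpace ℝ H]
    (L : Set H) : ℝ :=
  sSup ((fun x => ‖x‖) '' L)

section

variable {H : Type*} [NormedAddCommGroup H] [InnerProductSpace ℝ H] {L : Set H}

theorem norm_le_setNorm (hL : Bornology.IsBounded L) {x : H} (hx : x ∈ L) :
    ‖x‖ ≤ setNorm L := by
  obtain ⟨C, hC⟩ := hL.exists_norm_le
  exact le_csSup ⟨C, forall_mem_image.2 hC⟩ (mem_image_of_mem _ hx)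

theorem radialFn_smul_mem (hcl : IsClosed L) (hbdd : Bornology.IsBounded L) (h0 : (0 : H) ∈ L)
    {u : H} (hu : u ≠ 0) : radialFn L u • u ∈ L := by
  obtain ⟨C, hC⟩ := hbdd.exists_norm_le
  set S : Set ℝ := {t | 0 ≤ t ∧ t • u ∈ L}
  have hS_closed : IsClosed S :=
    isClosed_Ici.inter (hcl.preimage (continuous_id.smul continuous_const))
  have hS_bdd : BddAbove S := by
    refine ⟨C / ‖u‖, fun t ⟨ht, htu⟩ => (le_div_iff₀ (norm_pos_iff.2 hu)).2 ?_⟩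
    simpa [norm_smul, abs_of_nonneg ht] using hC _ htu
  exact (hS_closed.csSup_mem ⟨0, le_rfl, by simpa using h0⟩ hS_bdd).2

theorem Balanced.smul_mem_of_abs_le_radialFn (hbal : Balanced ℝ L) (hcl : IsClosed L)
    (hbdd : Bornology.IsBounded L) (hne : L.Nonempty) {u : H} (hu : u ≠ 0) {t : ℝ}
    (ht : |t| ≤ radialFn L u) : t • u ∈ L :=
  hbal.smul_mem_mono (radialFn_smul_mem hcl hbdd (hbal.zero_mem hne) hu)
    (by simpa [Real.norm_eq_abs, abs_of_nonneg ((abs_nonneg t).trans ht)] using ht)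

theorem Balanced.half_smul_sub_mem (hbal : Balanced ℝ L) (hconv : Convex ℝ L) {y z : H}
    (hy : y ∈ L) (hz : z ∈ L) : (2⁻¹ : ℝ) • (y - z) ∈ L := by
  convert hconv hy (hbal.neg_mem_iff.2 hz) (by norm_num : (0 : ℝ) ≤ 2⁻¹)
    (by norm_num : (0 : ℝ) ≤ 2⁻¹) (by norm_num) using 1
  module

theorem sub_inner_smul_mem_orthogonal_singleton {e : H} (he : ‖e‖ = 1) (x : H) :
    x - inner ℝ e x • e ∈ (ℝ ∙ e)ᗮ := by
  simpa [Submodule.starProjection_unit_singleton ℝ he] using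
    (ℝ ∙ e).sub_starProjection_mem_orthogonal x

end

theorem stmt_7_general {H : Type*} [NormedAddCommGroup H] [InnerProductSpace ℝ H]
    (e : H) (he : ‖e‖ = 1) (η : ℝ) (hη0 : 0 ≤ η) (hη1 : η < 1)
    (L : Set H) (hLcl : IsClosed L) (hLconv : Convex ℝ L)
    (hLbdd : Bornology.IsBounded L) (hLsym : L = -L)
    (hρ : (1 - η) * setNorm L ≤ radialFn L e) :
    (1 - η) • L ⊆
      (L ∩ (Submodule.span ℝ {e} : Set H)) + (2 : ℝ) • (L ∩ ((ℝ ∙ e)ᗮ : Set H)) := by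
  have hbal : Balanced ℝ L :=
    (balanced_iff_neg_mem hLconv).2 fun x hx => by rw [hLsym]; exact neg_mem_neg.2 hx
  rintro _ ⟨x, hx, rfl⟩
  set c := inner ℝ e x
  have hη : |1 - η| = 1 - η := abs_of_nonneg (by linarith)
  have hc : |c| ≤ setNorm L :=
    calc |c| ≤ ‖e‖ * ‖x‖ := abs_real_inner_le_norm e x
      _ = ‖x‖ := by rw [he, one_mul]
      _ ≤ setNorm L := norm_le_setNorm hLbdd hx
  have ha : ((1 - η) * c) • e ∈ L := by
    refine hbal.smul_mem_of_abs_le_radialFn hLcl hLbdd ⟨x, hx⟩ (by rintro rfl; simp at he) ?_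
    calc |(1 - η) * c| = (1 - η) * |c| := by rw [abs_mul, hη]
      _ ≤ (1 - η) * setNorm L := by gcongr
      _ ≤ radialFn L e := hρ
  have hxη : (1 - η) • x ∈ L :=
    hbal.smul_mem (by rw [Real.norm_eq_abs, hη]; linarith) hx
  have hb_perp : (2⁻¹ : ℝ) • ((1 - η) • x - ((1 - η) * c) • e) ∈ (ℝ ∙ e)ᗮ := by
    rw [mul_smul, ← smul_sub]
    exact Submodule.smul_mem _ _ <|
      Submodule.smul_mem _ _ (sub_inner_smul_mem_orthogonal_singleton he x)
  refine ⟨_, ⟨ha, Submodule.smul_mem _ _ (Submodule.mem_span_singleton_self e)⟩, _,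
    smul_mem_smul_set ⟨hbal.half_smul_sub_mem hLconv hxη ha, hb_perp⟩, ?_⟩
  module

/-- If `L` is a symmetric convex body in a Hilbert space of dimension at least `2`,
`e` a unit vector, `η ∈ [0,1)` and `ρ_L(e) ≥ (1 - η)‖L‖`, then
`(1 - η) • L ⊆ (L ∩ span{e}) + 2 • (L ∩ e^⊥)`. -/
theorem stmt_7 {H : Type*} [NormedAddCommGroup H] [InnerProductSpace ℝ H] [CompleteSpace H]
    (hdim : 2 ≤ Module.rank ℝ H) (e : H) (he : ‖e‖ = 1) (η : ℝ) (hη0 : 0 ≤ η) (hη1 : η < 1)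
    (L : Set H) (hLcl : IsClosed L) (hLconv : Convex ℝ L)
    (hLbdd : Bornology.IsBounded L) (hLint : (interior L).Nonempty) (hLsym : L = -L)
    (hρ : (1 - η) * setNorm L ≤ radialFn L e) :
    (1 - η) • L ⊆
      (L ∩ (Submodule.span ℝ {e} : Set H)) + (2 : ℝ) • (L ∩ ((ℝ ∙ e)ᗮ : Set H)) :=
  stmt_7_general e he η hη0 hη1 L hLcl hLconv hLbdd hLsym hρ
end

section
/- Let C be a symmetric convex body in an infinite-dimensional real Hilbert space H. For every complete orthonormal system 𝐞 = {e_γ}_{γ∈Γ} of H and every positive integer k, one has Q^k(𝐞, C) = C, where Q^k(𝐞, C) = ⋂_{S ∈ [Γ]_k} P_{Γ∖S}⁻¹(P_{Γ∖S}(C)). -/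
/-!
If `x ∉ C`, separate it from `C` by a vector `v`: `⟪v, c⟫ ≤ u < ⟪v, x⟫` for `c ∈ C`. The
coefficients `⟪e, v⟫`, `e ∈ E`, are square-summable and `E` is infinite, so there are `k`
elements `S ⊆ E` on which they are as small as we like; then the projection `P` onto the closed
span of `E ∖ S` moves `v` by arbitrarily little. Since `x ∈ Q^k(E, C)` there is `c ∈ C` with
`P x = P c`, hence `⟪v, x - c⟫ = ⟪v - P v, x - c⟫` is arbitrarily small, `C` being bounded.
This contradicts the separation.
-/

open Set

/-- `Q^k(E, C) = ⋂_{S ∈ [E]_k} P_{E∖S}⁻¹(P_{E∖S}(C))`: the intersection over all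
`k`-element subsets `S ⊆ E` of the preimages of the projections of `C` onto the closed
spans of the complements `E ∖ S`. -/
noncomputable def kCoConvexHullH {H : Type*} [NormedAddCommGroup H] [InnerProductSpace ℝ H]
    [CompleteSpace H] (E : Set H) (k : ℕ) (C : Set H) : Set H :=
  ⋂ S ∈ {S : Set H | S ⊆ E ∧ S.Finite ∧ S.ncard = k},
    projCl (E \ S) ⁻¹' (projCl (E \ S) '' C)

open RealInnerProductSpace

section Projection

variable {H : Type*} [NormedAddCommGroup H] [InnerProductSpace ℝ H] [CompleteSpace H]

theorem projCl_eq_starProjection (T : Set H) :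
    projCl T = (Submodule.span ℝ T).topologicalClosure.starProjection :=
  rfl

theorem norm_sub_projCl_le (T : Set H) (v : H) {z : H}
    (hz : z ∈ (Submodule.span ℝ T).topologicalClosure) :
    ‖v - projCl T v‖ ≤ ‖v - z‖ := by
  rw [projCl_eq_starProjection, Submodule.starProjection_minimal]
  exact ciInf_le ⟨0, forall_mem_range.mpr fun _ => norm_nonneg _⟩
    (⟨z, hz⟩ : (Submodule.span ℝ T).topologicalClosure)

theorem inner_le_norm_sub_projCl_mul (T : Set H) (v : H) {y : H} (hy : projCl T y = 0) :
    ⟪v, y⟫ ≤ ‖v - projCl T v‖ * ‖y‖ := by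
  have hPv : ⟪projCl T v, y⟫ = 0 := by
    rw [projCl_eq_starProjection, Submodule.inner_starProjection_left_eq_right,
      ← projCl_eq_starProjection, hy, inner_zero_right]
  calc ⟪v, y⟫ = ⟪v - projCl T v, y⟫ := by rw [inner_sub_left, hPv, sub_zero]
    _ ≤ ‖v - projCl T v‖ * ‖y‖ := real_inner_le_norm _ _

end Projection

namespace IsCompleteONS

variable {H : Type*} [NormedAddCommGroup H] [InnerProductSpace ℝ H] {E : Set H}

theorem infinite (hE : IsCompleteONS E) (hinf : ¬ FiniteDimensional ℝ H) : E.Infinite := by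
  intro hfin
  have : FiniteDimensional ℝ (Submodule.span ℝ E) := FiniteDimensional.span_of_finite ℝ hfin
  have hspan : Submodule.span ℝ E = ⊤ := by
    rw [← hE.2, (Submodule.closed_of_finiteDimensional _).submodule_topologicalClosure_eq]
  exact hinf (Module.finite_def.mpr ⟨hfin.toFinset, by simpa using hspan⟩)

variable [CompleteSpace H]

noncomputable def hilbertBasis (hE : IsCompleteONS E) : HilbertBasis E ℝ H :=
  HilbertBasis.mk hE.1 (by simp [hE.2])

@[simp]
theorem coe_hilbertBasis (hE : IsCompleteONS E) : ⇑hE.hilbertBasis = ((↑) : E → H) :=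
  HilbertBasis.coe_mk _ _

theorem mem_closure_span_diff (hE : IsCompleteONS E) (t : Finset E) {z : H}
    (hz : ∀ i ∈ t, ⟪(i : H), z⟫ = 0) :
    z ∈ (Submodule.span ℝ (E \ (↑) '' (t : Set E))).topologicalClosure := by
  rw [← SetLike.mem_coe, Submodule.topologicalClosure_coe]
  refine mem_closure_of_tendsto (hE.hilbertBasis.hasSum_repr z) (.of_forall fun s => ?_)
  refine Submodule.sum_mem _ fun i _ => ?_
  by_cases hi : i ∈ t
  · simp [HilbertBasis.repr_apply_apply, hz i hi]
  · rw [coe_hilbertBasis]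
    exact Submodule.smul_mem _ _ (Submodule.subset_span ⟨i.2, by simpa using hi⟩)

theorem norm_sub_projCl_diff_sq_le (hE : IsCompleteONS E) (t : Finset E) (v : H) :
    ‖v - projCl (E \ (↑) '' (t : Set E)) v‖ ^ 2 ≤ ∑ i ∈ t, ⟪(i : H), v⟫ ^ 2 := by
  set w := ∑ i ∈ t, ⟪(i : H), v⟫ • (i : H)
  have hw : ∀ i ∈ t, ⟪(i : H), w⟫ = ⟪(i : H), v⟫ := fun i hi => hE.1.inner_right_sum _ hi
  have hvw := hE.mem_closure_span_diff t (z := v - w) fun i hi => by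
    rw [inner_sub_right, hw i hi, sub_self]
  have hww : ‖w‖ ^ 2 = ∑ i ∈ t, ⟪(i : H), v⟫ ^ 2 := by
    rw [← real_inner_self_eq_norm_sq, hE.1.inner_sum]
    simp [sq]
  calc ‖v - projCl _ v‖ ^ 2 ≤ ‖v - (v - w)‖ ^ 2 := by
        gcongr; exact norm_sub_projCl_le _ v hvw
    _ = _ := by rw [sub_sub_cancel, hww]

theorem exists_norm_sub_projCl_lt (hE : IsCompleteONS E) (hEinf : E.Infinite) (v : H)
    {ε : ℝ} (hε : 0 < ε) (k : ℕ) :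
    ∃ S, S ⊆ E ∧ S.Finite ∧ S.ncard = k ∧ ‖v - projCl (E \ S) v‖ < ε := by
  have hsum : Summable fun i : E => ⟪(i : H), v⟫ ^ 2 := by
    simpa using hE.1.inner_products_summable v
  obtain ⟨s, hs⟩ := hsum.vanishing (Iio_mem_nhds (pow_pos hε 2))
  have : Infinite E := hEinf.to_subtype
  obtain ⟨t, hts, rfl⟩ := s.finite_toSet.infinite_compl.exists_subset_card_eq k
  refine ⟨(↑) '' (t : Set E), by simp, t.finite_toSet.image _, ?_, ?_⟩
  · rw [ncard_image_of_injective _ Subtype.val_injective, ncard_coe_finset]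
  · refine lt_of_pow_lt_pow_left₀ 2 hε.le ((hE.norm_sub_projCl_diff_sq_le t v).trans_lt ?_)
    exact hs t (Finset.disjoint_coe.mp (subset_compl_iff_disjoint_right.mp hts))

end IsCompleteONS

section

variable {H : Type*} [NormedAddCommGroup H] [InnerProductSpace ℝ H] [CompleteSpace H]

theorem subset_kCoConvexHullH (E : Set H) (k : ℕ) (C : Set H) : C ⊆ kCoConvexHullH E k C :=
  fun _ hx => mem_iInter₂.mpr fun _ _ => mem_image_of_mem _ hx

theorem inner_le_of_mem_kCoConvexHullH {E : Set H} (hE : IsCompleteONS E) (hEinf : E.Infinite)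
    {k : ℕ} {C : Set H} (hC : Bornology.IsBounded C) {v : H} {u : ℝ}
    (hu : ∀ c ∈ C, ⟪v, c⟫ ≤ u) {x : H} (hx : x ∈ kCoConvexHullH E k C) : ⟪v, x⟫ ≤ u := by
  obtain ⟨M, hM, hCM⟩ := hC.exists_pos_norm_le
  refine le_of_forall_pos_le_add fun ε hε => ?_
  have hR : 0 < ‖x‖ + M := by positivity
  obtain ⟨S, hSE, hSfin, hSk, hS⟩ := hE.exists_norm_sub_projCl_lt hEinf v (div_pos hε hR) k
  obtain ⟨c, hc, hPc⟩ := mem_iInter₂.mp hx S ⟨hSE, hSfin, hSk⟩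
  have hPxc : projCl (E \ S) (x - c) = 0 := by rw [map_sub, hPc, sub_self]
  calc ⟪v, x⟫ = ⟪v, c⟫ + ⟪v, x - c⟫ := by rw [inner_sub_right]; ring
    _ ≤ u + ε / (‖x‖ + M) * (‖x‖ + M) := by
      gcongr
      · exact hu c hc
      · have hxc : ‖x - c‖ ≤ ‖x‖ + M := (norm_sub_le _ _).trans (by gcongr; exact hCM c hc)
        exact (inner_le_norm_sub_projCl_mul _ v hPxc).trans (by gcongr)
    _ = u + ε := by rw [div_mul_cancel₀ _ hR.ne']

end

theorem stmt_12_general {H : Type*} [NormedAddCommGroup H] [InnerProductSpace ℝ H] [CompleteSpace H]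
    (hinf : ¬ FiniteDimensional ℝ H)
    (C : Set H) (hCcl : IsClosed C) (hCconv : Convex ℝ C)
    (hCbdd : Bornology.IsBounded C)
    (E : Set H) (hE : IsCompleteONS E) (k : ℕ) :
    kCoConvexHullH E k C = C := by
  refine Subset.antisymm (fun x hx => ?_) (subset_kCoConvexHullH E k C)
  by_contra hxC
  obtain ⟨f, u, hfC, hfx⟩ := geometric_hahn_banach_closed_point hCconv hCcl hxC
  have hf : ∀ y, ⟪(InnerProductSpace.toDual ℝ H).symm f, y⟫ = f y :=
    fun _ => InnerProductSpace.toDual_symm_apply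
  have hxu := inner_le_of_mem_kCoConvexHullH hE (hE.infinite hinf) hCbdd
    (fun c hc => (hf c).trans_le (hfC c hc).le) hx
  linarith [hf x]

/-- For a symmetric convex body `C` in an infinite-dimensional Hilbert space `H`, every
complete orthonormal system `E` and every positive integer `k`, `Q^k(E, C) = C`. -/
theorem stmt_12 {H : Type*} [NormedAddCommGroup H] [InnerProductSpace ℝ H] [CompleteSpace H]
    (hinf : ¬ FiniteDimensional ℝ H)
    (C : Set H) (hCcl : IsClosed C) (hCconv : Convex ℝ C)
    (hCbdd : Bornology.IsBounded C) (hCint : (interior C).Nonempty) (hCsym : C = -C)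
    (E : Set H) (hE : IsCompleteONS E) (k : ℕ) (hk : 0 < k) :
    kCoConvexHullH E k C = C :=
  stmt_12_general hinf C hCcl hCconv hCbdd E hE k
end
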